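/- Lemma 3.1: Consider a binary reaction network, i.e. ‖y_k‖₁ ≤ 2 and ‖y'_k‖₁ ≤ 2 for all k, and let u : [0,∞) → ℝ^d be a differentiable solution of the mass-action ODE u'(t) = Σ_k κ_k u(t)^{y_k} ζ_k. Then u satisfies the DR condition if and only if B_{ij}(u(t)) = 0 for all i,j ∈ {1,…,d} and all t ≥ 0. -/
import Mathlib


open Finset

/-- Monomial `u^v = ∏ i, u i ^ v i` (with the convention `0^0 = 1`). -/
noncomputable def monPow {d : ℕ} (u : Fin d → ℝ) (v : Fin d → ℕ) : ℝ :=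
  ∏ i, u i ^ v i

/-- The reaction vector `ζ = y' - y`, viewed as a real vector. -/
def zetaVec {d : ℕ} (y y' : Fin d → ℕ) : Fin d → ℝ :=
  fun i => (y' i : ℝ) - (y i : ℝ)

/-- Stochastic mass action intensity `λ_k(x) = κ_k ∏_i x_i!/(x_i - y_{ki})!`,
taken to be `0` when `x` is not componentwise at least `y_k`. -/
noncomputable def intensity {d : ℕ} (κk : ℝ) (yk : Fin d → ℕ) (x : Fin d → ℕ) : ℝ :=
  κk * ∏ i, ((x i).descFactorial (yk i) : ℝ)

/-- Right-hand side of the deterministic mass-action ODE: `Σ_k κ_k c^{y_k} ζ_k`. -/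
noncomputable def massActionRHS {d K : ℕ} (κ : Fin K → ℝ) (y y' : Fin K → Fin d → ℕ)
    (c : Fin d → ℝ) : Fin d → ℝ :=
  ∑ k, (κ k * monPow c (y k)) • zetaVec (y k) (y' k)

/-- `c` is differentiable on `[0,∞)` and solves the mass-action ODE there. -/
def solvesMassAction {d K : ℕ} (κ : Fin K → ℝ) (y y' : Fin K → Fin d → ℕ)
    (c : ℝ → Fin d → ℝ) : Prop :=
  ∀ t ≥ (0:ℝ), HasDerivWithinAt c (massActionRHS κ y y' (c t)) (Set.Ici 0) t

/-- The dynamical and restricted (DR) complex balance condition: for every complex `z`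
with `‖z‖₁ ≥ 2` and every `t ≥ 0`,
`Σ_{k : y_k = z} κ_k c(t)^z = Σ_{k : y'_k = z} κ_k c(t)^{y_k}`. -/
def DRcondition {d K : ℕ} (κ : Fin K → ℝ) (y y' : Fin K → Fin d → ℕ)
    (c : ℝ → Fin d → ℝ) : Prop :=
  ∀ z : Fin d → ℕ, 2 ≤ ∑ i, z i → ∀ t ≥ (0:ℝ),
    ∑ k ∈ univ.filter (fun k => y k = z), κ k * monPow (c t) z
      = ∑ k ∈ univ.filter (fun k => y' k = z), κ k * monPow (c t) (y k)

/-- `P` solves the chemical master equation on `[0,∞)`: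
`∂ₜ P(x,t) = Σ_k λ_k(x-ζ_k) P(x-ζ_k,t) 1{x-ζ_k ≥ 0} - Σ_k λ_k(x) P(x,t)`. -/
def solvesCME {d K : ℕ} (κ : Fin K → ℝ) (y y' : Fin K → Fin d → ℕ)
    (P : (Fin d → ℕ) → ℝ → ℝ) : Prop :=
  ∀ x : Fin d → ℕ, ∀ t ≥ (0:ℝ),
    HasDerivWithinAt (P x)
      ((∑ k, if ∀ i, y' k i ≤ x i + y k i then
          intensity (κ k) (y k) (fun i => x i + y k i - y' k i)
            * P (fun i => x i + y k i - y' k i) t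
        else 0)
       - ∑ k, intensity (κ k) (y k) x * P x t)
      (Set.Ici 0) t

/-- The product-Poisson probability mass function `∏_i e^{-c_i} c_i^{x_i}/x_i!`. -/
noncomputable def productPoisson {d : ℕ} (c : Fin d → ℝ) (x : Fin d → ℕ) : ℝ :=
  ∏ i, Real.exp (-(c i)) * (c i) ^ (x i) / (x i).factorial

/-- The diffusion matrix of the Poisson representation:
`B_{ij}(u) = Σ_k κ_k u^{y_k} (y'_{ki} y'_{kj} - y_{ki} y_{kj} - δ_{ij} ζ_{ki})`. -/
noncomputable def Bmat {d K : ℕ} (κ : Fin K → ℝ) (y y' : Fin K → Fin d → ℕ)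
    (u : Fin d → ℝ) (i j : Fin d) : ℝ :=
  ∑ k, κ k * monPow u (y k) *
    ((y' k i : ℝ) * (y' k j : ℝ) - (y k i : ℝ) * (y k j : ℝ)
      - (if i = j then (1:ℝ) else 0) * zetaVec (y k) (y' k) i)

namespace DRaux

variable {d K : ℕ}

/-- The quadratic form appearing in the diffusion matrix. -/
noncomputable def mfun (i j : Fin d) (v : Fin d → ℕ) : ℝ :=
  (v i : ℝ) * (v j : ℝ) - (if i = j then (1:ℝ) else 0) * (v i : ℝ)

/-- The complex-balance defect at complex `z`. -/
noncomputable def Dz (κ : Fin K → ℝ) (y y' : Fin K → Fin d → ℕ) (c : Fin d → ℝ)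
    (z : Fin d → ℕ) : ℝ :=
  (∑ k ∈ univ.filter (fun k => y' k = z), κ k * monPow c (y k))
    - ∑ k ∈ univ.filter (fun k => y k = z), κ k * monPow c z

lemma single_le_sum' (z : Fin d → ℕ) (a : Fin d) : z a ≤ ∑ i, z i :=
  Finset.single_le_sum (fun i _ => Nat.zero_le _) (mem_univ a)

lemma pair_le_sum (z : Fin d → ℕ) {a b : Fin d} (hab : a ≠ b) : z a + z b ≤ ∑ i, z i := by
  rw [← Finset.sum_pair hab]
  exact Finset.sum_le_sum_of_subset (subset_univ _)

lemma eq_two_single {z : Fin d → ℕ} {a : Fin d} (hs : ∑ i, z i ≤ 2) (ha : z a = 2) :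
    z = fun i => if i = a then 2 else 0 := by
  funext i
  by_cases hi : i = a
  · subst hi; simp [ha]
  · have h := pair_le_sum z (show a ≠ i from fun h => hi h.symm)
    simp only [if_neg hi]
    omega

lemma eq_one_pair {z : Fin d → ℕ} {a b : Fin d} (hab : a ≠ b) (hs : ∑ i, z i ≤ 2)
    (ha : 1 ≤ z a) (hb : 1 ≤ z b) :
    z = fun i => if i = a then 1 else if i = b then 1 else 0 := by
  have hab2 : z a + z b ≤ 2 := le_trans (pair_le_sum z hab) hs
  have ha1 : z a = 1 := by omega
  have hb1 : z b = 1 := by omega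
  funext i
  by_cases hia : i = a
  · subst hia; simp [ha1]
  · by_cases hib : i = b
    · subst hib; simp [hia, hb1]
    · simp only [if_neg hia, if_neg hib]
      have h1 : a ∉ ({b, i} : Finset (Fin d)) := by
        simp only [Finset.mem_insert, Finset.mem_singleton]
        push_neg
        exact ⟨hab, fun h => hia h.symm⟩
      have hsum : z a + (z b + z i) ≤ ∑ j, z j := by
        calc z a + (z b + z i) = ∑ j ∈ insert a ({b, i} : Finset (Fin d)), z j := by
              rw [Finset.sum_insert h1, Finset.sum_pair (fun h => hib h.symm)]
          _ ≤ ∑ j, z j := Finset.sum_le_sum_of_subset (subset_univ _)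
      omega

lemma mfun_small {v : Fin d → ℕ} (i j : Fin d) (hv : ∑ x, v x ≤ 1) : mfun i j v = 0 := by
  unfold mfun
  by_cases hij : i = j
  · subst hij
    rw [if_pos rfl, one_mul]
    have h1 : v i ≤ 1 := le_trans (single_le_sum' v i) hv
    have : v i = 0 ∨ v i = 1 := by omega
    rcases this with h | h <;> rw [h] <;> norm_num
  · rw [if_neg hij, zero_mul, sub_zero]
    have h1 : v i + v j ≤ 1 := le_trans (pair_le_sum v hij) hv
    have : v i = 0 ∨ v j = 0 := by omega
    rcases this with h | h <;> rw [h] <;> norm_num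

lemma mfun_diag {v : Fin d → ℕ} (a : Fin d) (hv : ∑ i, v i ≤ 2) :
    mfun a a v = if v = (fun i => if i = a then 2 else 0) then 2 else 0 := by
  unfold mfun
  rw [if_pos rfl, one_mul]
  by_cases h2 : v a = 2
  · rw [if_pos (eq_two_single hv h2), h2]; norm_num
  · have hne : v ≠ (fun i => if i = a then 2 else 0) := by
      intro h; apply h2; rw [h]; simp
    rw [if_neg hne]
    have hle : v a ≤ 2 := le_trans (single_le_sum' v a) hv
    have : v a = 0 ∨ v a = 1 := by omega
    rcases this with h | h <;> rw [h] <;> norm_num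

lemma mfun_offdiag {v : Fin d → ℕ} {a b : Fin d} (hab : a ≠ b) (hv : ∑ i, v i ≤ 2) :
    mfun a b v
      = if v = (fun i => if i = a then 1 else if i = b then 1 else 0) then 1 else 0 := by
  unfold mfun
  rw [if_neg hab, zero_mul, sub_zero]
  by_cases ha : 1 ≤ v a
  · by_cases hb : 1 ≤ v b
    · have hp := le_trans (pair_le_sum v hab) hv
      have ha1 : v a = 1 := by omega
      have hb1 : v b = 1 := by omega
      rw [if_pos (eq_one_pair hab hv ha hb), ha1, hb1]; norm_num
    · have hb0 : v b = 0 := by omega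
      have hne : v ≠ (fun i => if i = a then 1 else if i = b then 1 else 0) := by
        intro h; rw [h] at hb0
        simp [Ne.symm hab] at hb0
      rw [if_neg hne, hb0]; norm_num
  · have ha0 : v a = 0 := by omega
    have hne : v ≠ (fun i => if i = a then 1 else if i = b then 1 else 0) := by
      intro h; rw [h] at ha0
      simp at ha0
    rw [if_neg hne, ha0]; norm_num

/-- The diffusion matrix decomposes as a sum of defects over complexes. -/
lemma Bmat_eq (κ : Fin K → ℝ) (y y' : Fin K → Fin d → ℕ) (c : Fin d → ℝ) (i j : Fin d) :
    Bmat κ y y' c i j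
      = ∑ z ∈ (univ.image y ∪ univ.image y'), mfun i j z * Dz κ y y' c z := by
  classical
  have h1 : ∀ k ∈ (univ : Finset (Fin K)), y k ∈ univ.image y ∪ univ.image y' :=
    fun k _ => mem_union_left _ (mem_image_of_mem _ (mem_univ k))
  have h2 : ∀ k ∈ (univ : Finset (Fin K)), y' k ∈ univ.image y ∪ univ.image y' :=
    fun k _ => mem_union_right _ (mem_image_of_mem _ (mem_univ k))
  have e1 : ∑ k, κ k * monPow c (y k) * mfun i j (y' k)
      = ∑ z ∈ univ.image y ∪ univ.image y',
          mfun i j z * ∑ k ∈ univ.filter (fun k => y' k = z), κ k * monPow c (y k) := by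
    rw [← Finset.sum_fiberwise_of_maps_to h2 (fun k => κ k * monPow c (y k) * mfun i j (y' k))]
    refine Finset.sum_congr rfl fun z _ => ?_
    rw [Finset.mul_sum]
    refine Finset.sum_congr rfl fun k hk => ?_
    rw [(Finset.mem_filter.mp hk).2]
    ring
  have e2 : ∑ k, κ k * monPow c (y k) * mfun i j (y k)
      = ∑ z ∈ univ.image y ∪ univ.image y',
          mfun i j z * ∑ k ∈ univ.filter (fun k => y k = z), κ k * monPow c z := by
    rw [← Finset.sum_fiberwise_of_maps_to h1 (fun k => κ k * monPow c (y k) * mfun i j (y k))]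
    refine Finset.sum_congr rfl fun z _ => ?_
    rw [Finset.mul_sum]
    refine Finset.sum_congr rfl fun k hk => ?_
    rw [(Finset.mem_filter.mp hk).2]
    ring
  have e0 : Bmat κ y y' c i j
      = (∑ k, κ k * monPow c (y k) * mfun i j (y' k))
        - ∑ k, κ k * monPow c (y k) * mfun i j (y k) := by
    unfold Bmat
    rw [← Finset.sum_sub_distrib]
    refine Finset.sum_congr rfl fun k _ => ?_
    simp only [mfun, zetaVec]
    ring
  rw [e0, e1, e2, ← Finset.sum_sub_distrib]
  refine Finset.sum_congr rfl fun z _ => ?_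
  unfold Dz
  ring

end DRaux

open DRaux in
/-- Lemma 3.1: for a binary reaction network and a solution `u` of the mass-action ODE,
the DR condition holds if and only if the Poisson-representation diffusion matrix vanishes
along the solution: `B_{ij}(u(t)) = 0` for all `i, j` and all `t ≥ 0`. -/
theorem DR_iff_diffusionMatrix_eq_zero
    {d K : ℕ} (κ : Fin K → ℝ) (y y' : Fin K → Fin d → ℕ)
    (hκ : ∀ k, 0 ≤ κ k) (hyy' : ∀ k, y' k ≠ y k)
    (hbin : ∀ k, (∑ i, y k i) ≤ 2 ∧ (∑ i, y' k i) ≤ 2)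
    (u : ℝ → Fin d → ℝ)
    (hODE : solvesMassAction κ y y' u) :
    DRcondition κ y y' u ↔ ∀ i j : Fin d, ∀ t ≥ (0:ℝ), Bmat κ y y' (u t) i j = 0 := by
  classical
  have hSle : ∀ z ∈ (univ.image y ∪ univ.image y' : Finset (Fin d → ℕ)), ∑ i, z i ≤ 2 := by
    intro z hz
    rcases Finset.mem_union.mp hz with h | h
    · obtain ⟨k, _, hk⟩ := Finset.mem_image.mp h
      exact hk ▸ (hbin k).1
    · obtain ⟨k, _, hk⟩ := Finset.mem_image.mp h
      exact hk ▸ (hbin k).2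
  constructor
  · intro hDR i j t ht
    rw [Bmat_eq]
    refine Finset.sum_eq_zero fun z hz => ?_
    by_cases h2 : 2 ≤ ∑ i, z i
    · have hD : Dz κ y y' (u t) z = 0 := by
        unfold Dz
        rw [hDR z h2 t ht]
        exact sub_self _
      rw [hD, mul_zero]
    · have h1 : ∑ x, z x ≤ 1 := by omega
      rw [mfun_small i j h1, zero_mul]
  · intro hB z hz2 t ht
    by_cases hzmem : z ∈ (univ.image y ∪ univ.image y' : Finset (Fin d → ℕ))
    · have hzle : ∑ i, z i ≤ 2 := hSle z hzmem
      obtain ⟨a, ha⟩ : ∃ a, 1 ≤ z a := by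
        by_contra h
        push_neg at h
        have h0 : ∑ i, z i = 0 := Finset.sum_eq_zero fun i _ => by have := h i; omega
        omega
      suffices hD : Dz κ y y' (u t) z = 0 by
        unfold Dz at hD
        linarith
      by_cases h2a : z a = 2
      · have hze := eq_two_single hzle h2a
        have hBaa := hB a a t ht
        rw [Bmat_eq] at hBaa
        have hsum : ∑ z' ∈ (univ.image y ∪ univ.image y' : Finset (Fin d → ℕ)),
            mfun a a z' * Dz κ y y' (u t) z' = 2 * Dz κ y y' (u t) z := by
          rw [Finset.sum_eq_single_of_mem z hzmem]
          · rw [mfun_diag a hzle, if_pos hze]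
          · intro z' hz' hne
            rw [mfun_diag a (hSle z' hz'), if_neg, zero_mul]
            intro h
            exact hne (h.trans hze.symm)
        rw [hsum] at hBaa
        linarith
      · have ha1 : z a = 1 := by
          have := single_le_sum' z a; omega
        obtain ⟨b, hb1, hab⟩ : ∃ b, 1 ≤ z b ∧ a ≠ b := by
          by_contra h
          push_neg at h
          have hall : ∀ i, i ≠ a → z i = 0 := by
            intro i hi
            by_contra h0
            exact hi ((h i (by omega)).symm)
          have hz1 : ∑ i, z i = z a :=
            Finset.sum_eq_single a (fun i _ hi => hall i hi)
              (fun h' => absurd (mem_univ a) h')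
          omega
        have he := eq_one_pair hab hzle ha1.ge hb1
        have hBab := hB a b t ht
        rw [Bmat_eq] at hBab
        have hsum : ∑ z' ∈ (univ.image y ∪ univ.image y' : Finset (Fin d → ℕ)),
            mfun a b z' * Dz κ y y' (u t) z' = Dz κ y y' (u t) z := by
          rw [Finset.sum_eq_single_of_mem z hzmem]
          · rw [mfun_offdiag hab hzle, if_pos he, one_mul]
          · intro z' hz' hne
            rw [mfun_offdiag hab (hSle z' hz'), if_neg, zero_mul]
            intro h
            exact hne (h.trans he.symm)
        rw [hsum] at hBab
        exact hBab
    · have h1 : (univ.filter (fun k => y k = z) : Finset (Fin K)) = ∅ := by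
        rw [Finset.filter_eq_empty_iff]
        intro k _ hk
        exact hzmem (mem_union_left _ (hk ▸ mem_image_of_mem y (mem_univ k)))
      have h2 : (univ.filter (fun k => y' k = z) : Finset (Fin K)) = ∅ := by
        rw [Finset.filter_eq_empty_iff]
        intro k _ hk
        exact hzmem (mem_union_right _ (hk ▸ mem_image_of_mem y' (mem_univ k)))
      rw [h1, h2, Finset.sum_empty, Finset.sum_empty]
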